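/- arXiv:1907.13307 — 4 statements merged into one kernel-verified Lean document; each statement's English description precedes it below -/
import Mathlib

section
/- Let f be closed and μ-strongly convex with minimizer x̄₀ and minimum f*. Fix penalties 0 = λ₋₁ and λ₀ ≤ λ₁ ≤ ... ≤ λ_T > 0 and centers x₀,...,x_T. Define f^i(x) = f(x) + (λ_i/2)‖x - x_i‖² with minimizer x̄_{i+1}. Then for all j ≥ 0, f^j(x̄_{j+1}) - f* ≤ Σ_{i=0}^{j} (λ_i/2)‖x̄_i - x_i‖². -/
/-!
Each proximal value `f^i(x̄_{i+1})` is at most `f^i(x̄_i) = f(x̄_i) + (λ_i/2)‖x̄_i - x_i‖²`, while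
`f(x̄_{i+1}) ≤ f^i(x̄_{i+1})` because the penalty is nonnegative; chaining these inequalities
from `f(x̄₀) = f*` telescopes to the bound.
-/

open Finset

theorem sub_le_sum_range_of_le_add {a F c : ℕ → ℝ} (hstep : ∀ i, F i ≤ a i + c i)
    (hnext : ∀ i, a (i + 1) ≤ F i) (j : ℕ) :
    F j - a 0 ≤ ∑ i ∈ range (j + 1), c i := by
  induction j with
  | zero => simpa [add_comm] using hstep 0
  | succ n ih =>
    rw [sum_range_succ]
    linarith [hstep (n + 1), hnext n]

theorem inexact_prox_value_bound_general {d : ℕ} (T : ℕ)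
    (f : EuclideanSpace ℝ (Fin d) → ℝ)
    (lam : ℕ → ℝ) (hlam0 : lam 0 = 0) (hmono : Monotone lam)
    (x xbar : ℕ → EuclideanSpace ℝ (Fin d))
    (fstar : ℝ) (hfstar : fstar = f (xbar 0))
    (hmin : ∀ i y, f (xbar (i + 1)) + lam (i + 1) / 2 * ‖xbar (i + 1) - x i‖ ^ 2
        ≤ f y + lam (i + 1) / 2 * ‖y - x i‖ ^ 2) :
    ∀ j, j ≤ T →
      (f (xbar (j + 1)) + lam (j + 1) / 2 * ‖xbar (j + 1) - x j‖ ^ 2) - fstar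
        ≤ ∑ i ∈ Finset.range (j + 1), lam (i + 1) / 2 * ‖xbar i - x i‖ ^ 2 := by
  intro j _
  have hlam_nonneg (i : ℕ) : 0 ≤ lam i := hlam0 ▸ hmono (Nat.zero_le i)
  subst hfstar
  refine sub_le_sum_range_of_le_add (a := fun i => f (xbar i)) (fun i => hmin i (xbar i))
    (fun i => ?_) j
  have := hlam_nonneg (i + 1)
  simp only [le_add_iff_nonneg_right]
  positivity

/-- inexact proximal point bound on the proximal values.  Here `lam 0 = 0`
plays the role of `λ₋₁`, and `λ_i` from the paper is `lam (i+1)`; the proximal function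
is `f^i(y) = f(y) + (λ_i/2)‖y - x_i‖²` with minimizer `x̄_{i+1}`, and `x̄ 0` minimizes `f`.
Then `f^j(x̄_{j+1}) - f* ≤ ∑_{i=0}^{j} (λ_i/2)‖x̄_i - x_i‖²` for all `0 ≤ j ≤ T`. -/
theorem inexact_prox_value_bound {d : ℕ} (T : ℕ) (μ : ℝ) (hμ : 0 < μ)
    (f : EuclideanSpace ℝ (Fin d) → ℝ)
    (hlsc : LowerSemicontinuous f)
    (hsc : ConvexOn ℝ Set.univ (fun x => f x - μ / 2 * ‖x‖ ^ 2))
    (lam : ℕ → ℝ) (hlam0 : lam 0 = 0) (hmono : Monotone lam)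
    (hpos : ∀ i, 1 ≤ i → i ≤ T + 1 → 0 < lam i)
    (x xbar : ℕ → EuclideanSpace ℝ (Fin d))
    (fstar : ℝ) (hfstar : fstar = f (xbar 0))
    (hmin0 : ∀ y, f (xbar 0) ≤ f y)
    (hmin : ∀ i y, f (xbar (i + 1)) + lam (i + 1) / 2 * ‖xbar (i + 1) - x i‖ ^ 2
        ≤ f y + lam (i + 1) / 2 * ‖y - x i‖ ^ 2) :
    ∀ j, j ≤ T →
      (f (xbar (j + 1)) + lam (j + 1) / 2 * ‖xbar (j + 1) - x j‖ ^ 2) - fstar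
        ≤ ∑ i ∈ Finset.range (j + 1), lam (i + 1) / 2 * ‖xbar i - x i‖ ^ 2 :=
  inexact_prox_value_bound_general T f lam hlam0 hmono x xbar fstar hfstar hmin
end

section
/- In the inexact proximal point setting, for all j ≥ 0 the function gap at x_{j+1} satisfies f(x_{j+1}) - f* ≤ (f^j(x_{j+1}) - f^j(x̄_{j+1})) + Σ_{i=0}^{j} (λ_i/2)‖x̄_i - x_i‖². -/
open Set Finset

/-!
Write `f^i` for the proximal objective `f + (λ_{i+1}/2)‖· - x_i‖²`, minimised by `x̄_{i+1}`.
Comparing `x̄_{i+1}` with the competitor `x̄_i` gives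
`f^i(x̄_{i+1}) ≤ f(x̄_i) + (λ_{i+1}/2)‖x̄_i - x_i‖²`, and since the penalties are nonnegative,
`f(x̄_{i+1}) ≤ f^i(x̄_{i+1})`. Telescoping from `x̄_0` bounds `f^j(x̄_{j+1}) - f*` by the sum of
the penalties at the exact minimisers; adding `f(x_{j+1}) ≤ f^j(x_{j+1})` gives the claim.
-/

section ProximalPoint

variable {E : Type*} [SeminormedAddCommGroup E]

noncomputable def proxObjective (f : E → ℝ) (lam : ℝ) (c y : E) : ℝ :=
  f y + lam / 2 * ‖y - c‖ ^ 2

theorem le_proxObjective (f : E → ℝ) {lam : ℝ} (hlam : 0 ≤ lam) (c y : E) :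
    f y ≤ proxObjective f lam c y := by
  unfold proxObjective
  have : 0 ≤ lam / 2 * ‖y - c‖ ^ 2 := by positivity
  linarith

variable {f : E → ℝ} {lam : ℕ → ℝ} {x xbar : ℕ → E}

theorem proxObjective_minimizer_le
    (hmin : ∀ i, IsMinOn (proxObjective f (lam (i + 1)) (x i)) univ (xbar (i + 1))) (j : ℕ) :
    proxObjective f (lam (j + 1)) (x j) (xbar (j + 1))
      ≤ f (xbar j) + lam (j + 1) / 2 * ‖xbar j - x j‖ ^ 2 :=
  isMinOn_univ_iff.1 (hmin j) (xbar j)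

theorem proxObjective_minimizer_sub_le_sum (hlam : ∀ i, 0 ≤ lam i)
    (hmin : ∀ i, IsMinOn (proxObjective f (lam (i + 1)) (x i)) univ (xbar (i + 1))) (j : ℕ) :
    proxObjective f (lam (j + 1)) (x j) (xbar (j + 1)) - f (xbar 0)
      ≤ ∑ i ∈ range (j + 1), lam (i + 1) / 2 * ‖xbar i - x i‖ ^ 2 := by
  induction j with
  | zero =>
    have hstep := proxObjective_minimizer_le hmin 0
    rw [zero_add, sum_range_one]
    linarith
  | succ n ih =>
    have hstep := proxObjective_minimizer_le hmin (n + 1)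
    have hpen := le_proxObjective f (hlam (n + 1)) (x n) (xbar (n + 1))
    rw [sum_range_succ]
    linarith

end ProximalPoint

theorem inexact_prox_error_decomposition_general {d : ℕ} (T : ℕ)
    (f : EuclideanSpace ℝ (Fin d) → ℝ)
    (lam : ℕ → ℝ) (hlam0 : lam 0 = 0) (hmono : Monotone lam)
    (x xbar : ℕ → EuclideanSpace ℝ (Fin d))
    (fstar : ℝ) (hfstar : fstar = f (xbar 0))
    (hmin : ∀ i y, f (xbar (i + 1)) + lam (i + 1) / 2 * ‖xbar (i + 1) - x i‖ ^ 2
        ≤ f y + lam (i + 1) / 2 * ‖y - x i‖ ^ 2) :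
    ∀ j, j ≤ T →
      f (x (j + 1)) - fstar
        ≤ ((f (x (j + 1)) + lam (j + 1) / 2 * ‖x (j + 1) - x j‖ ^ 2)
            - (f (xbar (j + 1)) + lam (j + 1) / 2 * ‖xbar (j + 1) - x j‖ ^ 2))
          + ∑ i ∈ Finset.range (j + 1), lam (i + 1) / 2 * ‖xbar i - x i‖ ^ 2 := by
  intro j _
  have hlam : ∀ i, 0 ≤ lam i := fun i => hlam0 ▸ hmono i.zero_le
  have hexact := proxObjective_minimizer_sub_le_sum hlam (fun i => isMinOn_univ_iff.2 (hmin i)) j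
  have hinexact := le_proxObjective f (hlam (j + 1)) (x j) (x (j + 1))
  unfold proxObjective at hexact hinexact
  linarith

/-- inexact proximal point error decomposition.  Here `lam 0 = 0` plays the
role of `λ₋₁` and `λ_i` from the paper is `lam (i+1)`.  For all `0 ≤ j ≤ T`,
`f(x_{j+1}) - f* ≤ (f^j(x_{j+1}) - f^j(x̄_{j+1})) + ∑_{i=0}^{j} (λ_i/2)‖x̄_i - x_i‖²`. -/
theorem inexact_prox_error_decomposition {d : ℕ} (T : ℕ) (μ : ℝ) (hμ : 0 < μ)
    (f : EuclideanSpace ℝ (Fin d) → ℝ)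
    (hlsc : LowerSemicontinuous f)
    (hsc : ConvexOn ℝ Set.univ (fun x => f x - μ / 2 * ‖x‖ ^ 2))
    (lam : ℕ → ℝ) (hlam0 : lam 0 = 0) (hmono : Monotone lam)
    (hpos : ∀ i, 1 ≤ i → i ≤ T + 1 → 0 < lam i)
    (x xbar : ℕ → EuclideanSpace ℝ (Fin d))
    (fstar : ℝ) (hfstar : fstar = f (xbar 0))
    (hmin0 : ∀ y, f (xbar 0) ≤ f y)
    (hmin : ∀ i y, f (xbar (i + 1)) + lam (i + 1) / 2 * ‖xbar (i + 1) - x i‖ ^ 2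
        ≤ f y + lam (i + 1) / 2 * ‖y - x i‖ ^ 2) :
    ∀ j, j ≤ T →
      f (x (j + 1)) - fstar
        ≤ ((f (x (j + 1)) + lam (j + 1) / 2 * ‖x (j + 1) - x j‖ ^ 2)
            - (f (xbar (j + 1)) + lam (j + 1) / 2 * ‖xbar (j + 1) - x j‖ ^ 2))
          + ∑ i ∈ Finset.range (j + 1), lam (i + 1) / 2 * ‖xbar i - x i‖ ^ 2 :=
  inexact_prox_error_decomposition_general T f lam hlam0 hmono x xbar fstar hfstar hmin
end

section
/- In the inexact proximal point setting with f additionally L-smooth, for all j ≥ 0: f(x_j) - f* ≤ ((L + λ_{j-1})/2)‖x̄_j - x_j‖² + Σ_{i=0}^{j-1} (λ_i/2)‖x̄_i - x_i‖². -/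
open Set Finset

section Helpers
open RealInnerProductSpace
variable {E : Type*} [NormedAddCommGroup E] [InnerProductSpace ℝ E] [CompleteSpace E]

/-- descent lemma -/
lemma descent_lemma {f : E → ℝ} {L : ℝ} (hL : 0 ≤ L) (hdiff : Differentiable ℝ f)
    (hlip : ∀ x y, ‖gradient f x - gradient f y‖ ≤ L * ‖x - y‖) (x y : E) :
    f y ≤ f x + ⟪gradient f x, y - x⟫ + L / 2 * ‖y - x‖ ^ 2 := by
  set v := y - x with hv
  have hline : ∀ t : ℝ, HasDerivAt (fun t : ℝ => x + t • v) v t := by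
    intro t
    simpa using (((hasDerivAt_id t).smul_const v).const_add x)
  have hf' : ∀ t : ℝ, HasDerivAt (fun t : ℝ => f (x + t • v))
      ⟪gradient f (x + t • v), v⟫ t := by
    intro t
    have hF : HasFDerivAt f (InnerProductSpace.toDual ℝ E (gradient f (x + t • v)))
        (x + t • v) := hasGradientAt_iff_hasFDerivAt.mp (hdiff _).hasGradientAt
    simpa [Function.comp_def] using (hdiff (x + t • v)).hasFDerivAt.comp_hasDerivAt t (hline t)
  set C : ℝ := ⟪gradient f x, v⟫ with hC
  set K : ℝ := L / 2 * ‖v‖ ^ 2 with hK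
  set φ : ℝ → ℝ := fun t => f (x + t • v) - t * C - K * t ^ 2 with hφdef
  have hφ : ∀ t : ℝ, HasDerivAt φ (⟪gradient f (x + t • v), v⟫ - C - K * (2 * t)) t := by
    intro t
    have h1 : HasDerivAt (fun t : ℝ => t * C) C t := by
      simpa using (hasDerivAt_id t).mul_const C
    have h2 : HasDerivAt (fun t : ℝ => K * t ^ 2) (K * (2 * t)) t := by
      simpa [mul_comm] using ((hasDerivAt_pow 2 t).const_mul K)
    exact ((hf' t).sub h1).sub h2
  have hderiv_nonpos : ∀ t ∈ Set.Ioo (0:ℝ) 1, deriv φ t ≤ 0 := by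
    intro t ht
    rw [(hφ t).deriv]
    have hineq : ⟪gradient f (x + t • v) - gradient f x, v⟫ ≤ L * t * ‖v‖ ^ 2 := by
      calc ⟪gradient f (x + t • v) - gradient f x, v⟫
          ≤ ‖gradient f (x + t • v) - gradient f x‖ * ‖v‖ := real_inner_le_norm _ _
        _ ≤ (L * ‖(x + t • v) - x‖) * ‖v‖ :=
            mul_le_mul_of_nonneg_right (hlip _ _) (norm_nonneg v)
        _ = L * t * ‖v‖ ^ 2 := by
            rw [show (x + t • v) - x = t • v by abel]
            rw [norm_smul, Real.norm_eq_abs, abs_of_nonneg ht.1.le]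
            ring
    have hsub : ⟪gradient f (x + t • v) - gradient f x, v⟫
        = ⟪gradient f (x + t • v), v⟫ - C := by rw [inner_sub_left, hC]
    have : K * (2 * t) = L * t * ‖v‖ ^ 2 := by rw [hK]; ring
    linarith [hineq, hsub.symm.le]
  have hdAll : Differentiable ℝ φ := fun t => (hφ t).differentiableAt
  have hcont : ContinuousOn φ (Set.Icc 0 1) := hdAll.continuous.continuousOn
  have hdiffOn : DifferentiableOn ℝ φ (interior (Set.Icc (0:ℝ) 1)) :=
    fun t _ => ((hφ t).differentiableAt).differentiableWithinAt
  have hanti : AntitoneOn φ (Set.Icc (0:ℝ) 1) := by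
    apply antitoneOn_of_deriv_nonpos (convex_Icc 0 1) hcont hdiffOn
    intro t ht
    rw [interior_Icc] at ht
    exact hderiv_nonpos t ht
  have h01 : φ 1 ≤ φ 0 :=
    hanti (Set.mem_Icc.mpr ⟨le_refl 0, zero_le_one⟩) (Set.mem_Icc.mpr ⟨zero_le_one, le_refl 1⟩)
      zero_le_one
  have hφ0 : φ 0 = f x := by simp [hφdef]
  have hφ1 : φ 1 = f y - C - K := by
    simp [hφdef, hv]
  rw [hφ0, hφ1] at h01
  linarith [h01]

lemma hasGradientAt_quad (c : ℝ) (a p : E) :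
    HasGradientAt (fun z => c / 2 * ‖z - a‖ ^ 2) (c • (p - a)) p := by
  rw [hasGradientAt_iff_hasFDerivAt]
  have h1 : HasFDerivAt (fun z : E => ‖z - a‖ ^ 2) (2 • (innerSL ℝ (p - a))) p := by
    simpa using ((hasFDerivAt_id p).sub_const a).norm_sq
  have h2 := h1.const_mul (c / 2)
  refine h2.congr_fderiv ?_
  ext z
  simp [inner_smul_left, real_inner_comm]
  ring

lemma grad_zero_of_min {g : E → ℝ} {G : E} {p : E} (h : HasGradientAt g G p)
    (hm : ∀ y, g p ≤ g y) : G = 0 := by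
  have hloc : IsLocalMin g p := Filter.Eventually.of_forall hm
  have h0 : fderiv ℝ g p = 0 := hloc.fderiv_eq_zero
  have hF := (hasGradientAt_iff_hasFDerivAt.mp h).fderiv
  rw [h0] at hF
  have : InnerProductSpace.toDual ℝ E G = 0 := hF.symm
  simpa using (InnerProductSpace.toDual ℝ E).map_eq_zero_iff.mp this

lemma step_bound {f : E → ℝ} {L : ℝ} (hL : 0 ≤ L) (hdiff : Differentiable ℝ f)
    (hlip : ∀ x y, ‖gradient f x - gradient f y‖ ≤ L * ‖x - y‖)
    {c : ℝ} (hc : 0 ≤ c) (a xb : E)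
    (hmin : ∀ y, f xb + c / 2 * ‖xb - a‖ ^ 2 ≤ f y + c / 2 * ‖y - a‖ ^ 2) (y : E) :
    f y + c / 2 * ‖y - a‖ ^ 2
      ≤ f xb + c / 2 * ‖xb - a‖ ^ 2 + (L + c) / 2 * ‖xb - y‖ ^ 2 := by
  have hg : HasGradientAt (fun z => f z + c / 2 * ‖z - a‖ ^ 2)
      (gradient f xb + c • (xb - a)) xb := by
    rw [hasGradientAt_iff_hasFDerivAt, map_add]
    exact HasFDerivAt.add (hasGradientAt_iff_hasFDerivAt.mp (hdiff xb).hasGradientAt)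
      (hasGradientAt_iff_hasFDerivAt.mp (hasGradientAt_quad c a xb))
  have hz : gradient f xb + c • (xb - a) = 0 := grad_zero_of_min hg hmin
  have hd := descent_lemma hL hdiff hlip xb y
  have hexp : ‖y - a‖ ^ 2 = ‖y - xb‖ ^ 2 + 2 * ⟪y - xb, xb - a⟫ + ‖xb - a‖ ^ 2 := by
    rw [show y - a = (y - xb) + (xb - a) by abel, norm_add_sq_real]
  have hinner : ⟪gradient f xb, y - xb⟫ + c * ⟪y - xb, xb - a⟫ = 0 := by
    have h0 : ⟪gradient f xb + c • (xb - a), y - xb⟫ = 0 := by rw [hz]; simp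
    rw [inner_add_left, real_inner_smul_left] at h0
    have hcomm := real_inner_comm (xb - a) (y - xb)
    nlinarith [h0, hcomm]
  have hns : ‖xb - y‖ ^ 2 = ‖y - xb‖ ^ 2 := by rw [norm_sub_rev]
  rw [hns, hexp]
  nlinarith [hd, hinner]

end Helpers

/-- inexact proximal point bound with smoothness.  Here `lam 0 = 0` plays
the role of `λ₋₁` and `λ_i` from the paper is `lam (i+1)`.  If `f` is additionally
`L`-smooth, then for all `j ≥ 0`,
`f(x_j) - f* ≤ ((L + λ_{j-1})/2)‖x̄_j - x_j‖² + ∑_{i=0}^{j-1} (λ_i/2)‖x̄_i - x_i‖²`. -/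
theorem inexact_prox_smooth_bound {d : ℕ} (T : ℕ) (μ L : ℝ) (hμ : 0 < μ) (hL : μ ≤ L)
    (f : EuclideanSpace ℝ (Fin d) → ℝ)
    (hsc : ConvexOn ℝ Set.univ (fun x => f x - μ / 2 * ‖x‖ ^ 2))
    (hdiff : Differentiable ℝ f)
    (hlip : ∀ x y, ‖gradient f x - gradient f y‖ ≤ L * ‖x - y‖)
    (lam : ℕ → ℝ) (hlam0 : lam 0 = 0) (hmono : Monotone lam)
    (hpos : ∀ i, 1 ≤ i → i ≤ T + 1 → 0 < lam i)
    (x xbar : ℕ → EuclideanSpace ℝ (Fin d))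
    (fstar : ℝ) (hfstar : fstar = f (xbar 0))
    (hmin0 : ∀ y, f (xbar 0) ≤ f y)
    (hmin : ∀ i y, f (xbar (i + 1)) + lam (i + 1) / 2 * ‖xbar (i + 1) - x i‖ ^ 2
        ≤ f y + lam (i + 1) / 2 * ‖y - x i‖ ^ 2) :
    ∀ j, j ≤ T + 1 →
      f (x j) - fstar
        ≤ (L + lam j) / 2 * ‖xbar j - x j‖ ^ 2
          + ∑ i ∈ Finset.range j, lam (i + 1) / 2 * ‖xbar i - x i‖ ^ 2 := by
  have hL0 : (0:ℝ) ≤ L := le_of_lt (lt_of_lt_of_le hμ hL)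
  have hlamnn : ∀ k, 0 ≤ lam k := fun k => hlam0 ▸ hmono (Nat.zero_le k)
  -- bound on f (xbar k)
  have habove : ∀ k, f (xbar k) ≤ fstar + ∑ i ∈ Finset.range k,
      lam (i + 1) / 2 * ‖xbar i - x i‖ ^ 2 := by
    intro k
    induction k with
    | zero => simp [hfstar]
    | succ k ih =>
      have hnn : 0 ≤ lam (k + 1) / 2 * ‖xbar (k + 1) - x k‖ ^ 2 :=
        mul_nonneg (by linarith [hlamnn (k + 1)]) (sq_nonneg _)
      have h2 := hmin k (xbar k)
      rw [Finset.sum_range_succ]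
      linarith
  intro j _
  cases j with
  | zero =>
    have hgz : gradient f (xbar 0) = 0 :=
      grad_zero_of_min (hdiff (xbar 0)).hasGradientAt hmin0
    have hd := descent_lemma hL0 hdiff hlip (xbar 0) (x 0)
    rw [hgz] at hd
    simp only [inner_zero_left, add_zero] at hd
    have hns : ‖x 0 - xbar 0‖ ^ 2 = ‖xbar 0 - x 0‖ ^ 2 := by rw [norm_sub_rev]
    rw [hns] at hd
    simp only [Finset.range_zero, Finset.sum_empty, add_zero, hlam0]
    rw [hfstar]
    linarith
  | succ k =>
    have hsb := step_bound hL0 hdiff hlip (hlamnn (k + 1)) (x k) (xbar (k + 1))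
      (hmin k) (x (k + 1))
    have h2 := hmin k (xbar k)
    have hk := habove k
    have hnn : 0 ≤ lam (k + 1) / 2 * ‖x (k + 1) - x k‖ ^ 2 :=
      mul_nonneg (by linarith [hlamnn (k + 1)]) (sq_nonneg _)
    rw [Finset.sum_range_succ]
    linarith
end

section
/- Let Y = {y₁,...,y_m} be points in a Euclidean space and x̄ a point such that strictly more than m/2 of the points yᵢ lie in the closed ball B_ε(x̄). For each i, let rᵢ = min{r ≥ 0 : |B_r(yᵢ) ∩ Y| > m/2}, and let i* minimize rᵢ. Then ‖y_{i*} - x̄‖ ≤ 3ε. -/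
open Finset

/-! Any two sets of more than `m/2` of the points meet. Let `j₀` lie in the ε-ball around `x̄`;
then `B_{2ε}(y j₀)` contains that whole ball, so `r j₀ ≤ 2ε` and hence `r i* ≤ 2ε`. The infimum
`r i*` is attained, so `B_{r i*}(y i*)` holds a majority and meets the ε-ball around `x̄` in some
`y j`, whence `‖y i* - x̄‖ ≤ r i* + ε ≤ 3ε`. -/

section MajorityRadius

variable {ι X : Type*} [Fintype ι] [PseudoMetricSpace X]

lemma exists_mem_mem_of_card_le_two_mul {c : ℝ} (hc : (Fintype.card ι : ℝ) ≤ 2 * c)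
    {A B : Finset ι} (hA : c < #A) (hB : c < #B) : ∃ j ∈ A, j ∈ B := by
  classical
  simp only [← mem_inter]
  refine inter_nonempty_of_card_lt_card_add_card (subset_univ A) (subset_univ B) ?_
  rw [card_univ]
  exact_mod_cast (by linarith : (Fintype.card ι : ℝ) < #A + #B)

lemma isClosed_setOf_lt_card_filter_le (f : ι → ℝ) (c : ℝ) :
    IsClosed {s : ℝ | c < #{j | f j ≤ s}} := by
  have h : {s : ℝ | c < #{j | f j ≤ s}} =
      ⋃ A ∈ {A : Finset ι | c < #A}, ⋂ j ∈ A, Set.Ici (f j) := by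
    ext s
    simp only [Set.mem_ofPred_eq, Set.mem_iUnion, Set.mem_iInter, Set.mem_Ici]
    constructor
    · exact fun hs => ⟨_, hs, fun j hj => (mem_filter.mp hj).2⟩
    · rintro ⟨A, hA, hAs⟩
      refine hA.trans_le ?_
      exact_mod_cast card_le_card fun j hj => mem_filter.mpr ⟨mem_univ j, hAs j hj⟩
  rw [h]
  exact (Set.toFinite _).isClosed_biUnion fun A _ => isClosed_biInter fun j _ => isClosed_Ici

def majorityRadii (c : ℝ) (y : ι → X) (x : X) : Set ℝ :=
  {s | 0 ≤ s ∧ c < #{j | dist (y j) x ≤ s}}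

lemma majorityRadii_nonempty {c : ℝ} (hc : c < Fintype.card ι) (y : ι → X) (x : X) :
    (majorityRadii c y x).Nonempty := by
  obtain ⟨M, hM⟩ := (Set.finite_range fun j => dist (y j) x).bddAbove
  refine ⟨max M 0, le_max_right M 0, ?_⟩
  have hall : ({j | dist (y j) x ≤ max M 0} : Finset ι) = univ :=
    filter_true_of_mem fun j _ => (hM ⟨j, rfl⟩).trans (le_max_left M 0)
  rwa [hall, card_univ]

lemma sInf_majorityRadii_mem {c : ℝ} (hc : c < Fintype.card ι) (y : ι → X) (x : X) :
    sInf (majorityRadii c y x) ∈ majorityRadii c y x :=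
  (isClosed_Ici.inter (isClosed_setOf_lt_card_filter_le _ c)).csInf_mem
    (majorityRadii_nonempty hc y x) ⟨0, fun _ hs => hs.1⟩

lemma two_mul_mem_majorityRadii {c ε : ℝ} {y : ι → X} {x : X}
    (hmaj : c < #{j | dist (y j) x ≤ ε}) {i : ι} (hi : dist (y i) x ≤ ε) :
    2 * ε ∈ majorityRadii c y (y i) := by
  refine ⟨by linarith [dist_nonneg (x := y i) (y := x)], hmaj.trans_le ?_⟩
  have hsub :
      ({j | dist (y j) x ≤ ε} : Finset ι) ⊆ ({j | dist (y j) (y i) ≤ 2 * ε} : Finset ι) :=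
    fun j hj => mem_filter.mpr ⟨mem_univ j, by
      linarith [dist_triangle_right (y j) (y i) x, (mem_filter.mp hj).2]⟩
  exact_mod_cast card_le_card hsub

theorem dist_le_three_mul_of_sInf_majorityRadii_le {c ε : ℝ}
    (hc : (Fintype.card ι : ℝ) ≤ 2 * c) {y : ι → X} {x : X}
    (hmaj : c < #{j | dist (y j) x ≤ ε}) {k : ι}
    (hk : ∀ i, sInf (majorityRadii c y (y k)) ≤ sInf (majorityRadii c y (y i))) :
    dist (y k) x ≤ 3 * ε := by
  set r := sInf (majorityRadii c y (y k))
  have hcard : c < Fintype.card ι := hmaj.trans_le (mod_cast card_le_univ _)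
  obtain ⟨i₀, hi₀⟩ := card_pos.mp (Nat.cast_pos.mp ((by linarith : (0 : ℝ) < #_)))
  have hr : r ≤ 2 * ε := (hk i₀).trans <|
    csInf_le ⟨0, fun _ hs => hs.1⟩ (two_mul_mem_majorityRadii hmaj (mem_filter.mp hi₀).2)
  obtain ⟨j, hjx, hjk⟩ := exists_mem_mem_of_card_le_two_mul hc hmaj
    (sInf_majorityRadii_mem hcard y (y k)).2
  linarith [dist_triangle_left (y k) x (y j), (mem_filter.mp hjx).2, (mem_filter.mp hjk).2]

end MajorityRadius

theorem robust_distance_estimation_general {d m : ℕ}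
    (y : Fin m → EuclideanSpace ℝ (Fin d))
    (xbar : EuclideanSpace ℝ (Fin d)) (ε : ℝ)
    (hmaj : (m : ℝ) / 2 <
      ((Finset.univ.filter (fun j => ‖y j - xbar‖ ≤ ε)).card : ℝ))
    (r : Fin m → ℝ)
    (hr : ∀ i, r i = sInf {s : ℝ | 0 ≤ s ∧ (m : ℝ) / 2 <
      ((Finset.univ.filter (fun j => ‖y j - y i‖ ≤ s)).card : ℝ)})
    (istar : Fin m) (histar : ∀ i, r istar ≤ r i) :
    ‖y istar - xbar‖ ≤ 3 * ε := by
  simp only [← dist_eq_norm] at hmaj hr ⊢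
  refine dist_le_three_mul_of_sInf_majorityRadii_le (c := (m : ℝ) / 2)
    (by rw [Fintype.card_fin]; linarith) hmaj fun i => ?_
  have hle := histar i
  rwa [hr, hr] at hle

/-- robust distance estimation with the Euclidean norm.  If strictly more
than `m/2` of the points `y i` lie in the closed ball `B_ε(x̄)`, and `r i` is the smallest
radius such that the ball `B_{r i}(y i)` contains strictly more than `m/2` of the points,
and `i*` minimizes `r`, then `‖y i* - x̄‖ ≤ 3ε`. -/
theorem robust_distance_estimation {d m : ℕ}
    (y : Fin m → EuclideanSpace ℝ (Fin d))
    (xbar : EuclideanSpace ℝ (Fin d)) (ε : ℝ) (hε : 0 < ε)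
    (hmaj : (m : ℝ) / 2 <
      ((Finset.univ.filter (fun j => ‖y j - xbar‖ ≤ ε)).card : ℝ))
    (r : Fin m → ℝ)
    (hr : ∀ i, r i = sInf {s : ℝ | 0 ≤ s ∧ (m : ℝ) / 2 <
      ((Finset.univ.filter (fun j => ‖y j - y i‖ ≤ s)).card : ℝ)})
    (istar : Fin m) (histar : ∀ i, r istar ≤ r i) :
    ‖y istar - xbar‖ ≤ 3 * ε :=
  robust_distance_estimation_general y xbar ε hmaj r hr istar histar
end
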